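/- Fix an integer W ≥ 2. For each d ∈ {2, …, W}, let α_d, β_d ∈ (0,1) with β_d < α_d, and let K_d be a nonnegative integer; let p ∈ [0,1], θ ∈ (0,1/2), and let L be a nonnegative integer. Let {A_{d,j}}, {B_{d,j}}, {P_i}, {Θ_i} be mutually independent with A_{d,j} ~ Bern(α_d), B_{d,j} ~ Bern(β_d) for j = 1, …, K_d, and P_i ~ Bern(p), Θ_i ~ Bern(θ) for i = 1, …, L. Let n ≥ 2 and ε > 0 satisfy Σ_{d=2}^{W} K_d · I(α_d,β_d) + L · p · I_θ ≥ (1+ε) log n. Then for every τ with 0 < τ ≤ ε, P( Σ_{d=2}^{W} a(α_d,β_d) Σ_{j=1}^{K_d} (B_{d,j} − A_{d,j}) + b(θ) Σ_{i=1}^{L} P_i (2Θ_i − 1) ≥ −τ log n ) ≤ n^{τ/2 − 1 − ε} ≤ n^{−(1 + ε/2)}. -/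

import Mathlib

open MeasureTheory ProbabilityTheory

/-- The Bernoulli distribution on `ℝ` with mean `q`. -/
noncomputable def bern (q : ℝ) : Measure ℝ :=
  (ENNReal.ofReal q) • Measure.dirac 1 + (ENNReal.ofReal (1 - q)) • Measure.dirac 0

/-- `a(α,β) = log (α(1-β) / (β(1-α)))`. -/
noncomputable def aQ (α β : ℝ) : ℝ := Real.log (α * (1 - β) / (β * (1 - α)))

/-- `I(α,β) = (√α - √β)²`. -/
noncomputable def IQ (α β : ℝ) : ℝ := (Real.sqrt α - Real.sqrt β) ^ 2

/-- `b(θ) = log ((1-θ)/θ)`. -/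
noncomputable def bQ (θ : ℝ) : ℝ := Real.log ((1 - θ) / θ)

/-- `I_θ = (√(1-θ) - √θ)²`. -/
noncomputable def IθQ (θ : ℝ) : ℝ := (Real.sqrt (1 - θ) - Real.sqrt θ) ^ 2

/-!
Chernoff bound at `t = 1/2`: `μ {S ≥ -τ log n} ≤ n^(τ/2) 𝔼[exp (S/2)]`, and by independence
`𝔼[exp (S/2)]` factorises over the terms of `S`. Since `exp (a(α,β)/2) = √(α(1-β)/(β(1-α)))`, a
hyperedge term contributes `(√(αβ) + √((1-α)(1-β)))² ≤ exp (-I(α,β))`, and since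
`exp (b(θ)/2) = √((1-θ)/θ)`, a rating term contributes `1 - p I_θ ≤ exp (-p I_θ)`.
Hence `𝔼[exp (S/2)] ≤ exp (-(1+ε) log n)`.
-/

section Bernoulli

variable {q r : ℝ}

lemma isProbabilityMeasure_bern (hq : q ∈ Set.Icc (0 : ℝ) 1) : IsProbabilityMeasure (bern q) := by
  constructor
  simp only [bern, Measure.add_apply, Measure.smul_apply, measure_univ, smul_eq_mul, mul_one]
  rw [← ENNReal.ofReal_add hq.1 (by linarith [hq.2])]
  norm_num

lemma integrable_ofReal_smul_dirac (f : ℝ → ℝ) (c x : ℝ) :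
    Integrable f (ENNReal.ofReal c • Measure.dirac x) :=
  ((integrable_const _).congr (ae_eq_dirac f).symm).smul_measure ENNReal.ofReal_ne_top

lemma integrable_bern (f : ℝ → ℝ) : Integrable f (bern q) :=
  (integrable_ofReal_smul_dirac f q 1).add_measure (integrable_ofReal_smul_dirac f (1 - q) 0)

lemma integral_bern (hq : q ∈ Set.Icc (0 : ℝ) 1) (f : ℝ → ℝ) :
    ∫ x, f x ∂bern q = q * f 1 + (1 - q) * f 0 := by
  rw [bern, integral_add_measure (integrable_ofReal_smul_dirac f q 1)
    (integrable_ofReal_smul_dirac f (1 - q) 0), integral_smul_measure,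
    integral_smul_measure, integral_dirac, integral_dirac, ENNReal.toReal_ofReal hq.1,
    ENNReal.toReal_ofReal (by linarith [hq.2]), smul_eq_mul, smul_eq_mul]

instance : SFinite (bern q) := by
  unfold bern; infer_instance

lemma integrable_bern_prod {f : ℝ × ℝ → ℝ} (hf : Measurable f) :
    Integrable f ((bern q).prod (bern r)) := by
  rw [integrable_prod_iff hf.aestronglyMeasurable]
  exact ⟨ae_of_all _ fun _ => integrable_bern _, integrable_bern _⟩

lemma integral_bern_prod (hq : q ∈ Set.Icc (0 : ℝ) 1) (hr : r ∈ Set.Icc (0 : ℝ) 1)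
    {f : ℝ × ℝ → ℝ} (hf : Measurable f) :
    ∫ z, f z ∂(bern q).prod (bern r) =
      q * (r * f (1, 1) + (1 - r) * f (1, 0)) + (1 - q) * (r * f (0, 1) + (1 - r) * f (0, 0)) := by
  rw [integral_prod f (integrable_bern_prod hf), integral_bern hq, integral_bern hr,
    integral_bern hr]

lemma hasLaw_bern_of_map_eq {Ω : Type*} [MeasurableSpace Ω] {μ : Measure Ω} {X : Ω → ℝ}
    (hq : q ∈ Set.Icc (0 : ℝ) 1) (hX : μ.map X = bern q) : HasLaw X (bern q) μ where
  aemeasurable := by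
    by_contra h
    have := isProbabilityMeasure_bern hq
    exact IsProbabilityMeasure.ne_zero (bern q) (by rw [← hX, Measure.map_of_not_aemeasurable h])
  map_eq := hX

end Bernoulli

lemma ProbabilityTheory.IndepFun.hasLaw_prodMk {Ω 𝓧 𝓨 : Type*} [MeasurableSpace Ω]
    [MeasurableSpace 𝓧] [MeasurableSpace 𝓨] {P : Measure Ω} [IsFiniteMeasure P]
    {μX : Measure 𝓧} {μY : Measure 𝓨} {X : Ω → 𝓧} {Y : Ω → 𝓨}
    (hXY : IndepFun X Y P) (hX : HasLaw X μX P) (hY : HasLaw Y μY P) :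
    HasLaw (fun ω => (X ω, Y ω)) (μX.prod μY) P where
  aemeasurable := hX.aemeasurable.prodMk hY.aemeasurable
  map_eq := by
    rw [(indepFun_iff_map_prod_eq_prod_map_map hX.aemeasurable hY.aemeasurable).1 hXY,
      hX.map_eq, hY.map_eq]

section BernoulliPair

open Real

variable {Ω : Type*} [MeasurableSpace Ω] {μ : Measure Ω} [IsProbabilityMeasure μ]
  {q r : ℝ} {Z : Ω → ℝ × ℝ}

lemma mgf_comp_of_hasLaw_bern_prod (hq : q ∈ Set.Icc (0 : ℝ) 1) (hr : r ∈ Set.Icc (0 : ℝ) 1)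
    (hZ : HasLaw Z ((bern q).prod (bern r)) μ) {g : ℝ × ℝ → ℝ} (hg : Measurable g) (t : ℝ) :
    0 < mgf (fun ω => g (Z ω)) μ t ∧
      mgf (fun ω => g (Z ω)) μ t =
        q * (r * exp (t * g (1, 1)) + (1 - r) * exp (t * g (1, 0))) +
          (1 - q) * (r * exp (t * g (0, 1)) + (1 - r) * exp (t * g (0, 0))) := by
  have hexp : Measurable fun z => exp (t * g z) := (hg.const_mul t).exp
  refine ⟨mgf_pos ?_, ?_⟩
  · have h := integrable_bern_prod (q := q) (r := r) hexp
    rw [← hZ.map_eq, integrable_map_measure hexp.aestronglyMeasurable hZ.aemeasurable] at h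
    exact h
  · exact (hZ.integral_comp hexp.aestronglyMeasurable).trans (integral_bern_prod hq hr hexp)

end BernoulliPair

section LikelihoodRatio

open Real

lemma exp_half_mul_log {x : ℝ} (hx : 0 < x) : exp (1 / 2 * log x) = √x := by
  rw [sqrt_eq_rpow, rpow_def_of_pos hx, mul_comm]

lemma sq_mul_add_mul_le_exp_neg {a b a' b' : ℝ} (ha : 0 ≤ a) (hb : 0 ≤ b) (ha' : 0 ≤ a')
    (hb' : 0 ≤ b') (hab : a ^ 2 + a' ^ 2 = 1) (hab' : b ^ 2 + b' ^ 2 = 1) :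
    (a * b + a' * b') ^ 2 ≤ exp (-(a - b) ^ 2) := by
  have hle : a * b + a' * b' ≤ 1 - (a - b) ^ 2 / 2 := by nlinarith [sq_nonneg (a' - b')]
  calc (a * b + a' * b') ^ 2 ≤ exp (-((a - b) ^ 2 / 2)) ^ 2 := by
        gcongr
        linarith [add_one_le_exp (-((a - b) ^ 2 / 2))]
    _ = exp (-(a - b) ^ 2) := by rw [← exp_nat_mul]; ring_nf

lemma bern_mgf_half_aQ_le {α β : ℝ} (hα : α ∈ Set.Ioo (0 : ℝ) 1) (hβ : β ∈ Set.Ioo (0 : ℝ) 1) :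
    α * (β + (1 - β) * exp (-(1 / 2 * aQ α β))) + (1 - α) * (β * exp (1 / 2 * aQ α β) + (1 - β))
      ≤ exp (-IQ α β) := by
  obtain ⟨hα0, hα1⟩ := hα
  obtain ⟨hβ0, hβ1⟩ := hβ
  have hu : exp (1 / 2 * aQ α β) = √α * √(1 - β) / (√β * √(1 - α)) := by
    rw [aQ, exp_half_mul_log (by field_simp; nlinarith), sqrt_div' _ (by nlinarith),
      sqrt_mul hα0.le, sqrt_mul hβ0.le]
  rw [exp_neg, hu, IQ]
  set a := √α with ha
  set b := √β with hb
  set a' := √(1 - α) with ha'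
  set b' := √(1 - β) with hb'
  have hsa : a ^ 2 = α := sq_sqrt hα0.le
  have hsb : b ^ 2 = β := sq_sqrt hβ0.le
  have hsa' : a' ^ 2 = 1 - α := sq_sqrt (by linarith)
  have hsb' : b' ^ 2 = 1 - β := sq_sqrt (by linarith)
  have : 0 < a := sqrt_pos.2 hα0
  have : 0 < b := sqrt_pos.2 hβ0
  have : 0 < a' := sqrt_pos.2 (by linarith)
  have : 0 < b' := sqrt_pos.2 (by linarith)
  calc _ = (a * b + a' * b') ^ 2 := by
        rw [← hsa', ← hsb', ← hsa, ← hsb]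
        field_simp
    _ ≤ exp (-(a - b) ^ 2) := sq_mul_add_mul_le_exp_neg (by positivity) (by positivity)
        (by positivity) (by positivity) (by linarith) (by linarith)

lemma bern_mgf_half_bQ_le {p θ : ℝ} (hθ : θ ∈ Set.Ioo (0 : ℝ) 1) :
    p * (θ * exp (1 / 2 * bQ θ) + (1 - θ) * exp (-(1 / 2 * bQ θ))) + (1 - p)
      ≤ exp (-(p * IθQ θ)) := by
  obtain ⟨hθ0, hθ1⟩ := hθ
  have hv : exp (1 / 2 * bQ θ) = √(1 - θ) / √θ := by
    rw [bQ, exp_half_mul_log (div_pos (by linarith) hθ0), sqrt_div' _ hθ0.le]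
  rw [exp_neg, hv, IθQ]
  set s := √θ with hs
  set s' := √(1 - θ) with hs'
  have hss : s ^ 2 = θ := sq_sqrt hθ0.le
  have hss' : s' ^ 2 = 1 - θ := sq_sqrt (by linarith)
  have : 0 < s := sqrt_pos.2 hθ0
  have : 0 < s' := sqrt_pos.2 (by linarith)
  calc _ = 1 + -(p * (s' - s) ^ 2) := by
        rw [← hss', ← hss]
        field_simp
        linear_combination p * (hss + hss')
    _ ≤ _ := by linarith [add_one_le_exp (-(p * (s' - s) ^ 2))]

end LikelihoodRatio

section TermMGF

open Real

variable {Ω : Type*} [MeasurableSpace Ω] {μ : Measure Ω} [IsProbabilityMeasure μ]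

lemma mgf_half_aQ_mul_sub_le {α β : ℝ} (hα : α ∈ Set.Ioo (0 : ℝ) 1) (hβ : β ∈ Set.Ioo (0 : ℝ) 1)
    {A B : Ω → ℝ} (hA : HasLaw A (bern α) μ) (hB : HasLaw B (bern β) μ) (hAB : IndepFun A B μ) :
    0 < mgf (fun ω => aQ α β * (B ω - A ω)) μ (1 / 2) ∧
      mgf (fun ω => aQ α β * (B ω - A ω)) μ (1 / 2) ≤ exp (-IQ α β) := by
  obtain ⟨hpos, heq⟩ := mgf_comp_of_hasLaw_bern_prod (Set.Ioo_subset_Icc_self hα)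
    (Set.Ioo_subset_Icc_self hβ) (hAB.hasLaw_prodMk hA hB)
    (g := fun z => aQ α β * (z.2 - z.1)) (by fun_prop) (1 / 2)
  refine ⟨hpos, heq ▸ ?_⟩
  norm_num
  exact bern_mgf_half_aQ_le hα hβ

lemma mgf_half_bQ_mul_le {p θ : ℝ} (hp : p ∈ Set.Icc (0 : ℝ) 1) (hθ : θ ∈ Set.Ioo (0 : ℝ) 1)
    {P Θ : Ω → ℝ} (hP : HasLaw P (bern p) μ) (hΘ : HasLaw Θ (bern θ) μ) (hPΘ : IndepFun P Θ μ) :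
    0 < mgf (fun ω => bQ θ * (P ω * (2 * Θ ω - 1))) μ (1 / 2) ∧
      mgf (fun ω => bQ θ * (P ω * (2 * Θ ω - 1))) μ (1 / 2) ≤ exp (-(p * IθQ θ)) := by
  obtain ⟨hpos, heq⟩ := mgf_comp_of_hasLaw_bern_prod hp
    (Set.Ioo_subset_Icc_self hθ) (hPΘ.hasLaw_prodMk hP hΘ)
    (g := fun z => bQ θ * (z.1 * (2 * z.2 - 1))) (by fun_prop) (1 / 2)
  refine ⟨hpos, heq ▸ ?_⟩
  norm_num
  exact bern_mgf_half_bQ_le hθ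

end TermMGF

lemma measure_ge_le_of_mgf_le {Ω : Type*} [MeasurableSpace Ω] {μ : Measure Ω}
    [IsProbabilityMeasure μ] {S : Ω → ℝ} {t ε C : ℝ} (ht : 0 ≤ t) (hpos : 0 < mgf S μ t)
    (hle : mgf S μ t ≤ Real.exp (-C)) :
    μ {ω | ε ≤ S ω} ≤ ENNReal.ofReal (Real.exp (-t * ε - C)) := by
  rw [← ofReal_measureReal (measure_ne_top _ _)]
  refine ENNReal.ofReal_le_ofReal ((measure_ge_le_exp_mul_mgf ε ht (mgf_pos_iff.1 hpos)).trans ?_)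
  rw [sub_eq_add_neg, Real.exp_add]
  gcongr


section IndependentPairs

variable {Ω ι : Type*} [MeasurableSpace Ω] {μ : Measure Ω} {X Y : ι → Ω → ℝ}
  {g : ι → ℝ × ℝ → ℝ}

lemma ProbabilityTheory.iIndepFun.indepFun_comp_pair_finsetSum (h : iIndepFun (Sum.elim X Y) μ)
    (hX : ∀ i, AEMeasurable (X i) μ) (hY : ∀ i, AEMeasurable (Y i) μ) (hg : ∀ i, Measurable (g i))
    {s : Finset ι} {i : ι} (hi : i ∉ s) :
    IndepFun (fun ω => g i (X i ω, Y i ω)) (fun ω => ∑ j ∈ s, g j (X j ω, Y j ω)) μ := by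
  classical
  have hXY : ∀ k, AEMeasurable (Sum.elim X Y k) μ := by rintro (k | k) <;> simp [hX, hY]
  have hdisj : Disjoint {.inl i, .inr i} (s.disjSum s) := by simp [hi]
  have hl : ∀ j ∈ s, .inl j ∈ s.disjSum s := fun j hj => by simpa using hj
  have hr : ∀ j ∈ s, .inr j ∈ s.disjSum s := fun j hj => by simpa using hj
  have hil : .inl i ∈ ({.inl i, .inr i} : Finset (ι ⊕ ι)) := by simp
  have hir : .inr i ∈ ({.inl i, .inr i} : Finset (ι ⊕ ι)) := by simp
  have hpair := (h.indepFun_finset₀ _ _ hdisj hXY).comp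
    (φ := fun v => g i (v ⟨.inl i, hil⟩, v ⟨.inr i, hir⟩))
    (ψ := fun v => ∑ j ∈ s.attach, g j (v ⟨.inl j, hl j j.2⟩, v ⟨.inr j, hr j j.2⟩))
    ((hg i).comp (by fun_prop))
    (Finset.measurable_sum _ fun j _ => (hg j).comp (by fun_prop))
  convert hpair using 1
  · rfl
  funext ω
  exact (Finset.sum_attach s fun j => g j (X j ω, Y j ω)).symm

lemma ProbabilityTheory.iIndepFun.mgf_sum_comp_pair (h : iIndepFun (Sum.elim X Y) μ)
    (hX : ∀ i, AEMeasurable (X i) μ) (hY : ∀ i, AEMeasurable (Y i) μ) (hg : ∀ i, Measurable (g i))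
    (s : Finset ι) (t : ℝ) :
    mgf (fun ω => ∑ i ∈ s, g i (X i ω, Y i ω)) μ t =
      ∏ i ∈ s, mgf (fun ω => g i (X i ω, Y i ω)) μ t := by
  have := h.isProbabilityMeasure
  classical
  induction s using Finset.induction_on with
  | empty => simp
  | insert i s hi ih =>
    have hexp : ∀ T : Ω → ℝ, AEMeasurable T μ →
        AEStronglyMeasurable (fun ω => Real.exp (t * T ω)) μ :=
      fun T hT => (hT.const_mul t).exp.aestronglyMeasurable
    rw [Finset.prod_insert hi, ← ih]
    simp_rw [Finset.sum_insert hi]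
    exact (h.indepFun_comp_pair_finsetSum hX hY hg hi).mgf_add
      (hexp _ ((hg i).comp_aemeasurable ((hX i).prodMk (hY i))))
      (hexp _ (Finset.aemeasurable_fun_sum _ fun j _ =>
        (hg j).comp_aemeasurable ((hX j).prodMk (hY j))))

lemma ProbabilityTheory.iIndepFun.measure_ge_sum_comp_pair_le (h : iIndepFun (Sum.elim X Y) μ)
    (hX : ∀ i, AEMeasurable (X i) μ) (hY : ∀ i, AEMeasurable (Y i) μ) (hg : ∀ i, Measurable (g i))
    {s : Finset ι} {t : ℝ} (ht : 0 ≤ t) {c : ι → ℝ}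
    (hc : ∀ i ∈ s, 0 < mgf (fun ω => g i (X i ω, Y i ω)) μ t ∧
      mgf (fun ω => g i (X i ω, Y i ω)) μ t ≤ Real.exp (-c i)) (ε : ℝ) :
    μ {ω | ε ≤ ∑ i ∈ s, g i (X i ω, Y i ω)} ≤
      ENNReal.ofReal (Real.exp (-t * ε - ∑ i ∈ s, c i)) := by
  have := h.isProbabilityMeasure
  have hmgf := h.mgf_sum_comp_pair hX hY hg s t
  refine measure_ge_le_of_mgf_le ht (hmgf ▸ Finset.prod_pos fun i hi => (hc i hi).1) ?_
  rw [hmgf, ← Finset.sum_neg_distrib, Real.exp_sum]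
  exact Finset.prod_le_prod (fun i hi => (hc i hi).1.le) fun i hi => (hc i hi).2

end IndependentPairs

abbrev HyperedgeIndex (W : ℕ) (K : ℕ → ℕ) : Type :=
  {x : ℕ × ℕ // x.1 ∈ Finset.Icc 2 W ∧ x.2 < K x.1}

instance (W : ℕ) (K : ℕ → ℕ) : Fintype (HyperedgeIndex W K) :=
  Fintype.subtype (((Finset.Icc 2 W).sigma fun d => Finset.range (K d)).map
    (Equiv.sigmaEquivProd ℕ ℕ).toEmbedding) (by simp)

lemma sum_hyperedgeIndex {M : Type*} [AddCommMonoid M] (W : ℕ) (K : ℕ → ℕ) (f : ℕ → ℕ → M) :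
    ∑ x : HyperedgeIndex W K, f x.1.1 x.1.2 =
      ∑ d ∈ Finset.Icc 2 W, ∑ j ∈ Finset.range (K d), f d j := by
  rw [← Finset.sum_subtype (((Finset.Icc 2 W).sigma fun d => Finset.range (K d)).map
    (Equiv.sigmaEquivProd ℕ ℕ).toEmbedding) (by simp) (fun x => f x.1 x.2), Finset.sum_map,
    Finset.sum_sigma]
  rfl

theorem measure_ge_llr_sum_le {Ω ι κ : Type*} [MeasurableSpace Ω] {μ : Measure Ω}
    [Fintype ι] [Fintype κ] {α β : ι → ℝ} {p θ : ℝ} (hα : ∀ i, α i ∈ Set.Ioo (0 : ℝ) 1)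
    (hβ : ∀ i, β i ∈ Set.Ioo (0 : ℝ) 1) (hp : p ∈ Set.Icc (0 : ℝ) 1) (hθ : θ ∈ Set.Ioo (0 : ℝ) 1)
    {A B : ι → Ω → ℝ} {P Θ : κ → Ω → ℝ}
    (hA : ∀ i, HasLaw (A i) (bern (α i)) μ) (hB : ∀ i, HasLaw (B i) (bern (β i)) μ)
    (hP : ∀ k, HasLaw (P k) (bern p) μ) (hΘ : ∀ k, HasLaw (Θ k) (bern θ) μ)
    (hindep : iIndepFun (Sum.elim (Sum.elim A B) (Sum.elim P Θ)) μ) (ε : ℝ) :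
    μ {ω | ε ≤ ∑ i, aQ (α i) (β i) * (B i ω - A i ω) + ∑ k, bQ θ * (P k ω * (2 * Θ k ω - 1))} ≤
      ENNReal.ofReal (Real.exp (-(1 / 2) * ε - (∑ i, IQ (α i) (β i) + ∑ _k : κ, p * IθQ θ))) := by
  have := hindep.isProbabilityMeasure
  let X : ι ⊕ κ → Ω → ℝ := Sum.elim A P
  let Y : ι ⊕ κ → Ω → ℝ := Sum.elim B Θ
  let g : ι ⊕ κ → ℝ × ℝ → ℝ := Sum.elim
    (fun i z => aQ (α i) (β i) * (z.2 - z.1)) (fun _ z => bQ θ * (z.1 * (2 * z.2 - 1)))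
  have hXY : iIndepFun (Sum.elim X Y) μ := by
    -- regroup the family `(A ⊕ B) ⊕ (P ⊕ Θ)` as `(A ⊕ P) ⊕ (B ⊕ Θ)`
    convert hindep.precomp (Equiv.sumSumSumComm _ _ _ _).injective using 1
    funext k
    rcases k with (i | k) | (i | k) <;> rfl
  have hX : ∀ k, AEMeasurable (X k) μ := by
    rintro (i | k)
    exacts [(hA i).aemeasurable, (hP k).aemeasurable]
  have hY : ∀ k, AEMeasurable (Y k) μ := by
    rintro (i | k)
    exacts [(hB i).aemeasurable, (hΘ k).aemeasurable]
  have hg : ∀ k, Measurable (g k) := by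
    rintro (i | k) <;> dsimp only [g, Sum.elim_inl, Sum.elim_inr] <;> fun_prop
  have hterm : ∀ k ∈ Finset.univ, 0 < mgf (fun ω => g k (X k ω, Y k ω)) μ (1 / 2) ∧
      mgf (fun ω => g k (X k ω, Y k ω)) μ (1 / 2) ≤
        Real.exp (-Sum.elim (fun i => IQ (α i) (β i)) (fun _ => p * IθQ θ) k) := by
    rintro (i | k) -
    · exact mgf_half_aQ_mul_sub_le (hα i) (hβ i) (hA i) (hB i)
        (hXY.indepFun (i := .inl (.inl i)) (j := .inr (.inl i)) (by simp))
    · exact mgf_half_bQ_mul_le hp hθ (hP k) (hΘ k)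
        (hXY.indepFun (i := .inl (.inr k)) (j := .inr (.inr k)) (by simp))
  simpa only [Fintype.sum_sum_type, Sum.elim_inl, Sum.elim_inr, X, Y, g] using
    hXY.measure_ge_sum_comp_pair_le hX hY hg (by norm_num) hterm ε

theorem local_likelihood_gap_bound_general
    {Ω : Type*} [MeasurableSpace Ω] (μ : Measure Ω) [IsProbabilityMeasure μ]
    (W : ℕ)
    (α β : ℕ → ℝ)
    (hαβ : ∀ d ∈ Finset.Icc 2 W, 0 < β d ∧ β d < α d ∧ α d < 1)
    (K : ℕ → ℕ) (L : ℕ)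
    (p θ : ℝ) (hp : p ∈ Set.Icc (0:ℝ) 1) (hθ : θ ∈ Set.Ioo (0:ℝ) (1/2))
    (A B : ℕ → ℕ → Ω → ℝ) (P Θv : ℕ → Ω → ℝ)
    (hA : ∀ d ∈ Finset.Icc 2 W, ∀ j < K d, Measure.map (A d j) μ = bern (α d))
    (hB : ∀ d ∈ Finset.Icc 2 W, ∀ j < K d, Measure.map (B d j) μ = bern (β d))
    (hP : ∀ i < L, Measure.map (P i) μ = bern p)
    (hΘ : ∀ i < L, Measure.map (Θv i) μ = bern θ)
    (hindep : iIndepFun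
      (Sum.elim
        (Sum.elim
          (fun x : {x : ℕ × ℕ // x.1 ∈ Finset.Icc 2 W ∧ x.2 < K x.1} => A x.1.1 x.1.2)
          (fun x : {x : ℕ × ℕ // x.1 ∈ Finset.Icc 2 W ∧ x.2 < K x.1} => B x.1.1 x.1.2))
        (Sum.elim (fun i : Fin L => P i) (fun i : Fin L => Θv i))) μ)
    (n : ℕ) (hn : 2 ≤ n) (ε τ : ℝ) (hτε : τ ≤ ε)
    (hinfo : (1 + ε) * Real.log n ≤
      (∑ d ∈ Finset.Icc 2 W, (K d : ℝ) * IQ (α d) (β d)) + (L : ℝ) * p * IθQ θ) :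
    (μ {ω | -(τ * Real.log n) ≤ (∑ d ∈ Finset.Icc 2 W, aQ (α d) (β d) *
            ∑ j ∈ Finset.range (K d), (B d j ω - A d j ω))
          + bQ θ * ∑ i ∈ Finset.range L, P i ω * (2 * Θv i ω - 1)}
      ≤ ENNReal.ofReal ((n : ℝ) ^ (τ / 2 - 1 - ε)))
    ∧ (n : ℝ) ^ (τ / 2 - 1 - ε) ≤ (n : ℝ) ^ (-(1 + ε / 2)) := by
  have hαβ' (x : HyperedgeIndex W K) :
      α x.1.1 ∈ Set.Ioo (0 : ℝ) 1 ∧ β x.1.1 ∈ Set.Ioo (0 : ℝ) 1 := by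
    obtain ⟨hβ0, hβα, hα1⟩ := hαβ x.1.1 x.2.1
    exact ⟨⟨by linarith, hα1⟩, ⟨hβ0, by linarith⟩⟩
  have hθ' : θ ∈ Set.Ioo (0 : ℝ) 1 := ⟨hθ.1, by linarith [hθ.2]⟩
  have hchernoff := measure_ge_llr_sum_le (ι := HyperedgeIndex W K) (κ := Fin L)
    (fun x => (hαβ' x).1) (fun x => (hαβ' x).2) hp hθ'
    (fun x => hasLaw_bern_of_map_eq (Set.Ioo_subset_Icc_self (hαβ' x).1) (hA _ x.2.1 _ x.2.2))
    (fun x => hasLaw_bern_of_map_eq (Set.Ioo_subset_Icc_self (hαβ' x).2) (hB _ x.2.1 _ x.2.2))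
    (fun i => hasLaw_bern_of_map_eq hp (hP i i.2))
    (fun i => hasLaw_bern_of_map_eq (Set.Ioo_subset_Icc_self hθ') (hΘ i i.2))
    hindep (-(τ * Real.log n))
  have hgap (ω : Ω) :
      ∑ x : HyperedgeIndex W K, aQ (α x.1.1) (β x.1.1) * (B x.1.1 x.1.2 ω - A x.1.1 x.1.2 ω) +
        ∑ i : Fin L, bQ θ * (P i ω * (2 * Θv i ω - 1)) =
      (∑ d ∈ Finset.Icc 2 W, aQ (α d) (β d) * ∑ j ∈ Finset.range (K d), (B d j ω - A d j ω)) +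
        bQ θ * ∑ i ∈ Finset.range L, P i ω * (2 * Θv i ω - 1) := by
    rw [sum_hyperedgeIndex W K fun d j => aQ (α d) (β d) * (B d j ω - A d j ω),
      Fin.sum_univ_eq_sum_range fun i => bQ θ * (P i ω * (2 * Θv i ω - 1))]
    simp_rw [Finset.mul_sum]
  have hcost : ∑ x : HyperedgeIndex W K, IQ (α x.1.1) (β x.1.1) + ∑ _i : Fin L, p * IθQ θ =
      (∑ d ∈ Finset.Icc 2 W, (K d : ℝ) * IQ (α d) (β d)) + L * p * IθQ θ := by
    simp [sum_hyperedgeIndex W K fun d _ => IQ (α d) (β d), mul_assoc]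
  simp_rw [hgap, hcost] at hchernoff
  refine ⟨hchernoff.trans (ENNReal.ofReal_le_ofReal ?_),
    Real.rpow_le_rpow_of_exponent_le (by exact_mod_cast (by omega : 1 ≤ n)) (by linarith)⟩
  rw [Real.rpow_def_of_pos (by positivity)]
  gcongr
  linarith

theorem local_likelihood_gap_bound
    {Ω : Type*} [MeasurableSpace Ω] (μ : Measure Ω) [IsProbabilityMeasure μ]
    (W : ℕ) (hW : 2 ≤ W)
    (α β : ℕ → ℝ)
    (hαβ : ∀ d ∈ Finset.Icc 2 W, 0 < β d ∧ β d < α d ∧ α d < 1)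
    (K : ℕ → ℕ) (L : ℕ)
    (p θ : ℝ) (hp : p ∈ Set.Icc (0:ℝ) 1) (hθ : θ ∈ Set.Ioo (0:ℝ) (1/2))
    (A B : ℕ → ℕ → Ω → ℝ) (P Θv : ℕ → Ω → ℝ)
    (hA : ∀ d ∈ Finset.Icc 2 W, ∀ j < K d, Measure.map (A d j) μ = bern (α d))
    (hB : ∀ d ∈ Finset.Icc 2 W, ∀ j < K d, Measure.map (B d j) μ = bern (β d))
    (hP : ∀ i < L, Measure.map (P i) μ = bern p)
    (hΘ : ∀ i < L, Measure.map (Θv i) μ = bern θ)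
    (hindep : iIndepFun
      (Sum.elim
        (Sum.elim
          (fun x : {x : ℕ × ℕ // x.1 ∈ Finset.Icc 2 W ∧ x.2 < K x.1} => A x.1.1 x.1.2)
          (fun x : {x : ℕ × ℕ // x.1 ∈ Finset.Icc 2 W ∧ x.2 < K x.1} => B x.1.1 x.1.2))
        (Sum.elim (fun i : Fin L => P i) (fun i : Fin L => Θv i))) μ)
    (n : ℕ) (hn : 2 ≤ n) (ε τ : ℝ) (hε : 0 < ε) (hτ : 0 < τ) (hτε : τ ≤ ε)
    (hinfo : (1 + ε) * Real.log n ≤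
      (∑ d ∈ Finset.Icc 2 W, (K d : ℝ) * IQ (α d) (β d)) + (L : ℝ) * p * IθQ θ) :
    (μ {ω | -(τ * Real.log n) ≤ (∑ d ∈ Finset.Icc 2 W, aQ (α d) (β d) *
            ∑ j ∈ Finset.range (K d), (B d j ω - A d j ω))
          + bQ θ * ∑ i ∈ Finset.range L, P i ω * (2 * Θv i ω - 1)}
      ≤ ENNReal.ofReal ((n : ℝ) ^ (τ / 2 - 1 - ε)))
    ∧ (n : ℝ) ^ (τ / 2 - 1 - ε) ≤ (n : ℝ) ^ (-(1 + ε / 2)) :=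
  local_likelihood_gap_bound_general μ W α β hαβ K L p θ hp hθ A B P Θv hA hB hP hΘ hindep n hn ε τ
    hτε hinfo
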